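/- arXiv:1811.02981 — 3 statements merged into one kernel-verified Lean document; each statement's English description precedes it below -/
import Mathlib

section
/- Let m ≥ 1, n > m be integers and g : [0,∞) → [0,∞) non-decreasing, positive on (0,∞), with G(t) = ∫_t^∞ g(ζ)^{-1/m} ζ^{1/m-1} dζ finite for t > 0. If liminf_{t→0⁺} G(t)^{n-m} · t < ∞, then liminf_{t→0⁺} g(t)^{m-n} · t^n < ∞. -/
/-!
On `(t, 2t]` the integrand of `G` is at least its value at `2t`, so
`G(t) ≥ t · g(2t)^{-1/m} (2t)^{1/m - 1} = (2t / g(2t))^{1/m} / 2`. Hence `g(2t)^{m-n} (2t)^n`, which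
is the `m`-th power of `(2t / g(2t))^{(n-m)/m} · 2t`, is at most `(2^{n-m+1} G(t)^{n-m} t)^m`.
A bound on `G(t)^{n-m} t` along a sequence `t → 0⁺` therefore bounds `g(s)^{m-n} s^n` along `s = 2t`.
-/

open Real MeasureTheory Set Filter Topology

lemma mul_sub_le_setIntegral_Ioi {f : ℝ → ℝ} {a b c : ℝ} (hab : a ≤ b)
    (hf : IntegrableOn f (Ioi a)) (hf0 : ∀ x ∈ Ioi a, 0 ≤ f x) (hc : ∀ x ∈ Ioc a b, c ≤ f x) :
    c * (b - a) ≤ ∫ x in Ioi a, f x := by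
  have hsub : Ioc a b ⊆ Ioi a := Ioc_subset_Ioi_self
  calc c * (b - a) = c * volume.real (Ioc a b) := by
        rw [measureReal_def, Real.volume_Ioc, ENNReal.toReal_ofReal (sub_nonneg.2 hab)]
    _ ≤ ∫ x in Ioc a b, f x :=
        setIntegral_ge_of_const_le_real measurableSet_Ioc (by simp) hc (hf.mono_set hsub)
    _ ≤ ∫ x in Ioi a, f x :=
        setIntegral_mono_set hf ((ae_restrict_mem measurableSet_Ioi).mono hf0)
          (Eventually.of_forall hsub)

lemma antitoneOn_rpow_neg_mul_rpow_sub_one {g : ℝ → ℝ} {p : ℝ}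
    (hmono : MonotoneOn g (Ioi 0)) (hpos : ∀ ζ ∈ Ioi (0:ℝ), 0 < g ζ) (hp0 : 0 ≤ p) (hp1 : p ≤ 1) :
    AntitoneOn (fun ζ => g ζ ^ (-p) * ζ ^ (p - 1)) (Ioi 0) := by
  intro x hx y hy hxy
  exact mul_le_mul (rpow_le_rpow_of_nonpos (hpos x hx) (hmono hx hy hxy) (by linarith))
    (rpow_le_rpow_of_nonpos hx hxy (by linarith)) (rpow_nonneg (le_of_lt hy) _)
    (rpow_nonneg (hpos x hx).le _)

lemma div_rpow_le_two_mul_setIntegral_Ioi {g : ℝ → ℝ} {p t : ℝ}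
    (hmono : MonotoneOn g (Ioi 0)) (hpos : ∀ ζ ∈ Ioi (0:ℝ), 0 < g ζ) (hp0 : 0 ≤ p) (hp1 : p ≤ 1)
    (ht : 0 < t) (hint : IntegrableOn (fun ζ => g ζ ^ (-p) * ζ ^ (p - 1)) (Ioi t)) :
    (2 * t / g (2 * t)) ^ p ≤ 2 * ∫ ζ in Ioi t, g ζ ^ (-p) * ζ ^ (p - 1) := by
  have h2t : 0 < 2 * t := by positivity
  have hg : 0 < g (2 * t) := hpos _ h2t
  have hIoi : Ioi t ⊆ Ioi 0 := Ioi_subset_Ioi ht.le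
  have hbound := mul_sub_le_setIntegral_Ioi (by linarith) hint
    (fun ζ hζ => mul_nonneg (rpow_nonneg (hpos ζ (hIoi hζ)).le _) (rpow_nonneg (hIoi hζ).le _))
    (fun ζ hζ => antitoneOn_rpow_neg_mul_rpow_sub_one hmono hpos hp0 hp1 (hIoi hζ.1) h2t hζ.2)
  have heq : g (2 * t) ^ (-p) * (2 * t) ^ (p - 1) * (2 * t - t) = (2 * t / g (2 * t)) ^ p / 2 := by
    rw [rpow_neg hg.le, rpow_sub_one h2t.ne', div_rpow h2t.le hg.le]
    field_simp
    ring
  linarith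

lemma rpow_sub_mul_rpow_eq_pow {a s : ℝ} {m n : ℕ} (ha : 0 < a) (hs : 0 < s) (hm : m ≠ 0)
    (hmn : m ≤ n) :
    a ^ ((m:ℝ) - n) * s ^ (n:ℝ) = (((s / a) ^ (1 / (m:ℝ))) ^ (n - m) * s) ^ m := by
  have hroot : ((s / a) ^ (1 / (m:ℝ))) ^ m = s / a := by
    rw [← rpow_natCast, ← rpow_mul (by positivity), one_div_mul_cancel (by exact_mod_cast hm),
      rpow_one]
  have hexp : (m:ℝ) - n = -((n - m : ℕ) : ℝ) := by push_cast [Nat.cast_sub hmn]; ring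
  rw [mul_pow, ← pow_mul, mul_comm (n - m), pow_mul, hroot, hexp, rpow_neg ha.le, rpow_natCast,
    rpow_natCast, div_pow, ← Nat.sub_add_cancel hmn, pow_add, Nat.add_sub_cancel]
  field_simp

lemma tendsto_two_mul_nhdsGT_zero : Tendsto (fun t : ℝ => 2 * t) (𝓝[>] 0) (𝓝[>] 0) :=
  tendsto_iff_comap.2 (comap_mulLeft_nhdsGT_zero two_pos).ge

theorem stmt_4_general (m n : ℕ) (hm : 1 ≤ m) (hmn : m < n) (g : ℝ → ℝ)
    (hmono : MonotoneOn g (Set.Ici 0))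
    (hpos : ∀ ζ > (0:ℝ), 0 < g ζ)
    (hfin : ∀ t > (0:ℝ),
      IntegrableOn (fun ζ : ℝ => g ζ ^ (-(1/(m:ℝ))) * ζ ^ ((1/(m:ℝ)) - 1)) (Set.Ioi t))
    (hliminf : ∃ M : ℝ, ∃ᶠ t in nhdsWithin (0:ℝ) (Set.Ioi 0),
      (∫ ζ in Set.Ioi t, g ζ ^ (-(1/(m:ℝ))) * ζ ^ ((1/(m:ℝ)) - 1)) ^ (n - m) * t ≤ M) :
    ∃ M : ℝ, ∃ᶠ t in nhdsWithin (0:ℝ) (Set.Ioi 0),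
      g t ^ ((m:ℝ) - (n:ℝ)) * t ^ (n:ℝ) ≤ M := by
  obtain ⟨M, hM⟩ := hliminf
  refine ⟨(2 ^ (n - m + 1) * M) ^ m, tendsto_two_mul_nhdsGT_zero.frequently ?_⟩
  refine (hM.and_eventually self_mem_nhdsWithin).mono fun t ⟨hle, (ht : 0 < t)⟩ => ?_
  have hp1 : 1 / (m:ℝ) ≤ 1 := div_le_one_of_le₀ (by exact_mod_cast hm) (Nat.cast_nonneg m)
  have hlower := div_rpow_le_two_mul_setIntegral_Ioi (hmono.mono Ioi_subset_Ici_self) hpos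
    (by positivity) hp1 ht (hfin t ht)
  have hg : 0 < g (2 * t) := hpos _ (by positivity)
  rw [rpow_sub_mul_rpow_eq_pow hg (by positivity) (by omega) hmn.le]
  refine pow_le_pow_left₀ (by positivity) ?_ m
  set G := ∫ ζ in Ioi t, g ζ ^ (-(1 / (m:ℝ))) * ζ ^ (1 / (m:ℝ) - 1)
  calc ((2 * t / g (2 * t)) ^ (1 / (m:ℝ))) ^ (n - m) * (2 * t)
      ≤ (2 * G) ^ (n - m) * (2 * t) := by gcongr
    _ = 2 ^ (n - m + 1) * (G ^ (n - m) * t) := by ring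
    _ ≤ 2 ^ (n - m + 1) * M := by gcongr

theorem stmt_4 (m n : ℕ) (hm : 1 ≤ m) (hmn : m < n) (g : ℝ → ℝ)
    (hmono : MonotoneOn g (Set.Ici 0))
    (hnonneg : ∀ ζ ≥ (0:ℝ), 0 ≤ g ζ)
    (hpos : ∀ ζ > (0:ℝ), 0 < g ζ)
    (hfin : ∀ t > (0:ℝ),
      IntegrableOn (fun ζ : ℝ => g ζ ^ (-(1/(m:ℝ))) * ζ ^ ((1/(m:ℝ)) - 1)) (Set.Ioi t))
    (hliminf : ∃ M : ℝ, ∃ᶠ t in nhdsWithin (0:ℝ) (Set.Ioi 0),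
      (∫ ζ in Set.Ioi t, g ζ ^ (-(1/(m:ℝ))) * ζ ^ ((1/(m:ℝ)) - 1)) ^ (n - m) * t ≤ M) :
    ∃ M : ℝ, ∃ᶠ t in nhdsWithin (0:ℝ) (Set.Ioi 0),
      g t ^ ((m:ℝ) - (n:ℝ)) * t ^ (n:ℝ) ≤ M :=
  stmt_4_general m n hm hmn g hmono hpos hfin hliminf
end

section
/- Let J : [r, 2r] → [0,∞) be a non-decreasing function with J(r) > 0, g : [0,∞) → (0,∞) non-decreasing, m ≥ 1 an integer, C > 0, and suppose J(r₂) − J(r₁) ≥ C (r₂ − r₁)^m g(J(r₁)) for all r ≤ r₁ < r₂ ≤ 2r. Then at least one of the following holds: (a) ∫_{J(r)}^{J(2r)} dζ / g(ζ/2) ≥ C' r^m, or (b) ∫_{J(r)}^{J(2r)} g(ζ/2)^{-1/m} ζ^{1/m−1} dζ ≥ C' r, where C' > 0 depends only on C, m. -/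
/-!
Put `d(s) = (J(s) / (C g(J(s))))^{1/m}`. The iteration inequality gives `J(s + d(s)) ≥ 2 J(s)`, so
jumping from `r` by `d` gives a chain along which `J` at least doubles; it therefore stops after
finitely many jumps, at a point `u` with `u + d(u) > 2r`. On a doubling block `(J(s), 2J(s)]` the
second integrand is at least `g(J(s))^{-1/m} ζ^{1/m-1}`, whose integral is a fixed multiple of
`d(s)`; summing over the chain, the second integral is `≳ u - r`. At the stopping point either
`2J(u) ≤ J(2r)`, and one more block gives `≳ d(u) > 2r - u`, or `J(2r) < 2J(u)`, so that
`ζ/2 ≤ J(u)` on `(J(u), J(2r)]` and the first integral is at least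
`(J(2r) - J(u)) / g(J(u)) ≥ C (2r - u)^m`. One of `u - r`, `2r - u` is at least `r/2`.
-/

open Real MeasureTheory Set Filter

theorem exists_stop_of_doubling_step {J Φ d : ℝ → ℝ} {r R b κ : ℝ}
    (hJ : ∀ s ∈ Icc r R, 0 < J s ∧ J s ≤ b) (hd : ∀ s ∈ Icc r R, 0 ≤ d s)
    (hstep : ∀ s ∈ Icc r R, s + d s ≤ R →
      2 * J s ≤ J (s + d s) ∧ κ * d s ≤ Φ (s + d s) - Φ s)
    {s : ℝ} (hs : s ∈ Icc r R) :
    ∃ u ∈ Icc s R, R < u + d u ∧ κ * (u - s) ≤ Φ u - Φ s := by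
  obtain ⟨n, hn⟩ := pow_unbounded_of_one_lt (b / J s) one_lt_two
  rw [div_lt_iff₀ (hJ s hs).1] at hn
  induction n generalizing s with
  | zero => linarith [(hJ s hs).2]
  | succ n ih =>
    by_cases hstop : R < s + d s
    · exact ⟨s, ⟨le_rfl, hs.2⟩, hstop, by simp⟩
    push Not at hstop
    have hds := hd s hs
    obtain ⟨hdouble, hΦ⟩ := hstep s hs hstop
    have hn' : b < 2 ^ n * J (s + d s) := by
      rw [pow_succ, mul_assoc] at hn
      exact hn.trans_le (by gcongr)
    obtain ⟨u, hu, hR, hΦu⟩ := ih ⟨by linarith [hs.1], hstop⟩ hn'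
    exact ⟨u, ⟨by linarith [hu.1], hu.2⟩, hR, by linarith⟩

section Integrals

variable {g : ℝ → ℝ}

noncomputable def rpowWeight (g : ℝ → ℝ) (p ζ : ℝ) : ℝ :=
  g (ζ / 2) ^ (-p) * ζ ^ (p - 1)

theorem intervalIntegrable_of_antitoneOn_Ioi {f : ℝ → ℝ} (hf : AntitoneOn f (Ioi 0)) {a b : ℝ}
    (ha : 0 < a) (hb : 0 < b) : IntervalIntegrable f volume a b :=
  (hf.mono fun _ hx => lt_of_lt_of_le (lt_min ha hb) hx.1).intervalIntegrable

theorem intervalIntegral_mono_interval_of_antitoneOn {f : ℝ → ℝ} (hf : AntitoneOn f (Ioi 0))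
    (hf0 : ∀ x > 0, 0 ≤ f x) {a b c d : ℝ} (ha : 0 < a) (hac : a ≤ c) (hcd : c ≤ d)
    (hdb : d ≤ b) : ∫ x in c..d, f x ≤ ∫ x in a..b, f x := by
  refine intervalIntegral.integral_mono_interval hac hcd hdb ?_
    (intervalIntegrable_of_antitoneOn_Ioi hf ha (by linarith))
  exact (ae_restrict_iff' measurableSet_Ioc).2 (ae_of_all _ fun x hx => hf0 x (ha.trans hx.1))

theorem antitoneOn_one_div_comp_half (hg : MonotoneOn g (Ici 0)) (hgpos : ∀ t > 0, 0 < g t) :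
    AntitoneOn (fun ζ => 1 / g (ζ / 2)) (Ioi 0) := by
  intro x (hx : 0 < x) y (hy : 0 < y) hxy
  exact one_div_le_one_div_of_le (hgpos _ (by positivity))
    (hg (by simp only [mem_Ici]; positivity) (by simp only [mem_Ici]; positivity) (by linarith))

theorem antitoneOn_rpowWeight (hg : MonotoneOn g (Ici 0)) (hgpos : ∀ t > 0, 0 < g t) {p : ℝ}
    (hp0 : 0 ≤ p) (hp1 : p ≤ 1) : AntitoneOn (rpowWeight g p) (Ioi 0) := by
  intro x (hx : 0 < x) y (hy : 0 < y) hxy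
  have hgx := hgpos (x / 2) (by positivity)
  have hgxy : g (x / 2) ≤ g (y / 2) :=
    hg (by simp only [mem_Ici]; positivity) (by simp only [mem_Ici]; positivity) (by linarith)
  exact mul_le_mul (rpow_le_rpow_of_nonpos hgx hgxy (by linarith))
    (rpow_le_rpow_of_nonpos hx hxy (by linarith)) (by positivity) (by positivity)

theorem rpowWeight_nonneg (hgpos : ∀ t > 0, 0 < g t) (p : ℝ) {ζ : ℝ} (hζ : 0 < ζ) :
    0 ≤ rpowWeight g p ζ := by
  have := hgpos (ζ / 2) (by positivity)
  unfold rpowWeight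
  positivity

theorem div_le_integral_one_div_comp_half (hg : MonotoneOn g (Ici 0))
    (hgpos : ∀ t > 0, 0 < g t) {A B : ℝ} (hA : 0 < A) (hAB : A ≤ B) (hB : B ≤ 2 * A) :
    (B - A) / g A ≤ ∫ ζ in A..B, 1 / g (ζ / 2) := by
  calc (B - A) / g A = ∫ _ in A..B, 1 / g A := by
        rw [intervalIntegral.integral_const, smul_eq_mul, mul_one_div]
    _ ≤ ∫ ζ in A..B, 1 / g (ζ / 2) := by
        refine intervalIntegral.integral_mono_on hAB intervalIntegrable_const
          (intervalIntegrable_of_antitoneOn_Ioi (antitoneOn_one_div_comp_half hg hgpos) hA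
            (by linarith)) fun ζ hζ => ?_
        have hζ0 : 0 < ζ := hA.trans_le hζ.1
        exact one_div_le_one_div_of_le (hgpos _ (by positivity))
          (hg (by simp only [mem_Ici]; positivity) hA.le (by linarith [hζ.2]))

theorem integral_rpow_sub_one_two_mul {p A : ℝ} (hp : 0 < p) (hA : 0 < A) :
    ∫ ζ in A..2 * A, ζ ^ (p - 1) = (2 ^ p - 1) / p * A ^ p := by
  rw [integral_rpow (Or.inl (by linarith)), sub_add_cancel, mul_rpow zero_le_two hA.le]
  ring

theorem le_integral_rpowWeight (hg : MonotoneOn g (Ici 0)) (hgpos : ∀ t > 0, 0 < g t)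
    {p A B : ℝ} (hp0 : 0 < p) (hp1 : p ≤ 1) (hA : 0 < A) (hAB : 2 * A ≤ B) :
    (2 ^ p - 1) / p * (A / g A) ^ p ≤ ∫ ζ in A..B, rpowWeight g p ζ := by
  have hgA := hgpos A hA
  have hanti := antitoneOn_rpowWeight hg hgpos hp0.le hp1
  calc (2 ^ p - 1) / p * (A / g A) ^ p = ∫ ζ in A..2 * A, g A ^ (-p) * ζ ^ (p - 1) := by
        rw [intervalIntegral.integral_const_mul, integral_rpow_sub_one_two_mul hp0 hA,
          div_rpow hA.le hgA.le, rpow_neg hgA.le]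
        field_simp
    _ ≤ ∫ ζ in A..2 * A, rpowWeight g p ζ := by
        refine intervalIntegral.integral_mono_on (by linarith)
          ((intervalIntegral.intervalIntegrable_rpow' (by linarith)).const_mul _)
          (intervalIntegrable_of_antitoneOn_Ioi hanti hA (by linarith)) fun ζ hζ => ?_
        have hζ0 : 0 < ζ := hA.trans_le hζ.1
        have hgζ : g (ζ / 2) ≤ g A :=
          hg (by simp only [mem_Ici]; positivity) hA.le (by linarith [hζ.2])
        exact mul_le_mul_of_nonneg_right
          (rpow_le_rpow_of_nonpos (hgpos _ (by positivity)) hgζ (by linarith)) (by positivity)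
    _ ≤ ∫ ζ in A..B, rpowWeight g p ζ :=
        intervalIntegral_mono_interval_of_antitoneOn hanti (fun _ => rpowWeight_nonneg hgpos p) hA
          le_rfl (by linarith) hAB

end Integrals

section Doubling

variable {m : ℕ} {C r x : ℝ} {J g : ℝ → ℝ}

/-- The length `ℓ` with `C ℓ ^ m g(x) = x`: by the iteration inequality, `J` at least doubles
from the value `J s = x` over `[s, s + ℓ]`. -/
noncomputable def doublingLength (C : ℝ) (m : ℕ) (g : ℝ → ℝ) (x : ℝ) : ℝ :=
  (x / (C * g x)) ^ (1 / (m : ℝ))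

-- `(2 ^ p - 1) / p = ∫ ζ in 1..2, ζ ^ (p - 1)` with `p = 1 / m`.
noncomputable def blockConstant (m : ℕ) (C : ℝ) : ℝ :=
  (2 ^ (1 / (m : ℝ)) - 1) / (1 / (m : ℝ)) * C ^ (1 / (m : ℝ))

theorem doublingLength_pos (hC : 0 < C) (hx : 0 < x) (hgx : 0 < g x) :
    0 < doublingLength C m g x :=
  rpow_pos_of_pos (by positivity) _

theorem mul_doublingLength_pow_mul (hm : m ≠ 0) (hC : 0 < C) (hx : 0 < x) (hgx : 0 < g x) :
    C * doublingLength C m g x ^ m * g x = x := by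
  rw [doublingLength, one_div, rpow_inv_natCast_pow (by positivity) hm]
  field_simp

theorem blockConstant_pos (hm : 1 ≤ m) (hC : 0 < C) : 0 < blockConstant m C := by
  have hp : (0 : ℝ) < 1 / m := by
    have : (1 : ℝ) ≤ m := by exact_mod_cast hm
    positivity
  have h2 : 0 < (2 : ℝ) ^ (1 / (m : ℝ)) - 1 := sub_pos.2 (one_lt_rpow one_lt_two hp)
  have := rpow_pos_of_pos hC (1 / (m : ℝ))
  unfold blockConstant
  positivity

theorem blockConstant_mul_doublingLength_le_integral (hm : 1 ≤ m) (hC : 0 < C)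
    (hg : MonotoneOn g (Ici 0)) (hgpos : ∀ t > 0, 0 < g t) {B : ℝ} (hx : 0 < x)
    (hxB : 2 * x ≤ B) :
    blockConstant m C * doublingLength C m g x ≤ ∫ ζ in x..B, rpowWeight g (1 / m) ζ := by
  have hgx := hgpos x hx
  have hm' : (1 : ℝ) ≤ m := by exact_mod_cast hm
  have hblock := le_integral_rpowWeight hg hgpos (p := 1 / m) (by positivity)
    (by rw [div_le_one (by positivity)]; exact hm') hx hxB
  rwa [blockConstant, doublingLength, mul_assoc, ← mul_rpow hC.le (by positivity),
    mul_div_assoc', mul_div_mul_left _ _ hC.ne']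

theorem two_mul_le_add_doublingLength (hm : 1 ≤ m) (hC : 0 < C) (hgpos : ∀ t > 0, 0 < g t)
    (hiter : ∀ r₁ r₂ : ℝ, r ≤ r₁ → r₁ < r₂ → r₂ ≤ 2 * r →
      J r₂ - J r₁ ≥ C * (r₂ - r₁) ^ m * g (J r₁))
    {s : ℝ} (hs : r ≤ s) (hJs : 0 < J s) (hstep : s + doublingLength C m g (J s) ≤ 2 * r) :
    2 * J s ≤ J (s + doublingLength C m g (J s)) := by
  have hgJ := hgpos _ hJs
  have := hiter s _ hs (by linarith [doublingLength_pos (m := m) hC hJs hgJ]) hstep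
  rw [add_sub_cancel_left, mul_doublingLength_pow_mul (by omega) hC hJs hgJ] at this
  linarith

theorem le_integral_one_div_comp_half_of_lt_two_mul (hm : 1 ≤ m) (hC : 0 < C)
    (hg : MonotoneOn g (Ici 0)) (hgpos : ∀ t > 0, 0 < g t)
    (hiter : ∀ r₁ r₂ : ℝ, r ≤ r₁ → r₁ < r₂ → r₂ ≤ 2 * r →
      J r₂ - J r₁ ≥ C * (r₂ - r₁) ^ m * g (J r₁))
    {u : ℝ} (hu : u ∈ Icc r (2 * r)) (hJu : 0 < J u) (hJ2r : J (2 * r) < 2 * J u) :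
    C * (2 * r - u) ^ m ≤ ∫ ζ in J u..J (2 * r), 1 / g (ζ / 2) := by
  rcases hu.2.eq_or_lt with rfl | hlt
  · simp [zero_pow (by omega : m ≠ 0)]
  have hgJ := hgpos _ hJu
  have hinc := hiter u (2 * r) hu.1 hlt le_rfl
  have hnonneg : 0 ≤ C * (2 * r - u) ^ m * g (J u) := by
    have : 0 < 2 * r - u := by linarith
    positivity
  calc C * (2 * r - u) ^ m ≤ (J (2 * r) - J u) / g (J u) := by
        rw [le_div_iff₀ hgJ]; linarith
    _ ≤ _ := div_le_integral_one_div_comp_half hg hgpos hJu (by linarith) hJ2r.le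

theorem exists_stop_point (hm : 1 ≤ m) (hC : 0 < C) (hr : 0 ≤ r)
    (hJ : MonotoneOn J (Icc r (2 * r))) (hJr : 0 < J r) (hg : MonotoneOn g (Ici 0))
    (hgpos : ∀ t > 0, 0 < g t)
    (hiter : ∀ r₁ r₂ : ℝ, r ≤ r₁ → r₁ < r₂ → r₂ ≤ 2 * r →
      J r₂ - J r₁ ≥ C * (r₂ - r₁) ^ m * g (J r₁)) :
    ∃ u ∈ Icc r (2 * r),
      blockConstant m C * (u - r) ≤ ∫ ζ in J r..J (2 * r), rpowWeight g (1 / m) ζ ∧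
      (blockConstant m C * r ≤ ∫ ζ in J r..J (2 * r), rpowWeight g (1 / m) ζ ∨
        C * (2 * r - u) ^ m ≤ ∫ ζ in J r..J (2 * r), 1 / g (ζ / 2)) := by
  have hr2 : r ≤ 2 * r := by linarith
  have hJbounds : ∀ s ∈ Icc r (2 * r), 0 < J s ∧ J s ≤ J (2 * r) := fun s hs =>
    ⟨hJr.trans_le (hJ ⟨le_rfl, hr2⟩ hs hs.1), hJ hs ⟨hr2, le_rfl⟩ hs.2⟩
  have hanti := antitoneOn_rpowWeight hg hgpos (p := 1 / m) (by positivity)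
    (by rw [div_le_one (by exact_mod_cast hm)]; exact_mod_cast hm)
  have hFint : ∀ s ∈ Icc r (2 * r),
      IntervalIntegrable (rpowWeight g (1 / m)) volume (J r) (J s) := fun s hs =>
    intervalIntegrable_of_antitoneOn_Ioi hanti hJr (hJbounds s hs).1
  have hd : ∀ s ∈ Icc r (2 * r), 0 < doublingLength C m g (J s) := fun s hs =>
    doublingLength_pos hC (hJbounds s hs).1 (hgpos _ (hJbounds s hs).1)
  obtain ⟨u, hu, hstop, hFu⟩ := exists_stop_of_doubling_step (κ := blockConstant m C)
    (Φ := fun s => ∫ ζ in J r..J s, rpowWeight g (1 / m) ζ) hJbounds (fun s hs => (hd s hs).le)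
    (fun s hs hstep => by
      have hdouble := two_mul_le_add_doublingLength hm hC hgpos hiter hs.1 (hJbounds s hs).1 hstep
      refine ⟨hdouble, ?_⟩
      rw [intervalIntegral.integral_interval_sub_left
        (hFint _ ⟨by linarith [hs.1, hd s hs], hstep⟩) (hFint s hs)]
      exact blockConstant_mul_doublingLength_le_integral hm hC hg hgpos (hJbounds s hs).1 hdouble)
    ⟨le_rfl, hr2⟩
  obtain ⟨hJu, hJu2r⟩ := hJbounds u hu
  have hsplit := intervalIntegral.integral_add_adjacent_intervals (hFint u hu)
    (intervalIntegrable_of_antitoneOn_Ioi hanti hJu (hJbounds _ ⟨hr2, le_rfl⟩).1)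
  have hrest : 0 ≤ ∫ ζ in J u..J (2 * r), rpowWeight g (1 / m) ζ :=
    intervalIntegral.integral_nonneg hJu2r fun _ hζ =>
      rpowWeight_nonneg hgpos _ (hJu.trans_le hζ.1)
  simp only [intervalIntegral.integral_same, sub_zero] at hFu
  refine ⟨u, hu, by linarith, ?_⟩
  rcases le_or_gt (2 * J u) (J (2 * r)) with hsmall | hbig
  · left
    have hκ := blockConstant_pos hm hC
    have hlast := blockConstant_mul_doublingLength_le_integral hm hC hg hgpos hJu hsmall
    have : blockConstant m C * (2 * r - u) ≤ blockConstant m C * doublingLength C m g (J u) := by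
      gcongr; linarith
    nlinarith
  · right
    calc C * (2 * r - u) ^ m ≤ ∫ ζ in J u..J (2 * r), 1 / g (ζ / 2) :=
          le_integral_one_div_comp_half_of_lt_two_mul hm hC hg hgpos hiter hu hJu hbig
      _ ≤ _ := intervalIntegral_mono_interval_of_antitoneOn
          (antitoneOn_one_div_comp_half hg hgpos)
          (fun ζ hζ => (one_div_pos.2 (hgpos _ (by positivity))).le) hJr
          (hJ ⟨le_rfl, hr2⟩ hu hu.1) hJu2r le_rfl

end Doubling

theorem stmt_11 (m : ℕ) (hm : 1 ≤ m) (C : ℝ) (hC : 0 < C) :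
    ∃ C' > (0:ℝ), ∀ (r : ℝ) (J g : ℝ → ℝ), 0 < r →
      MonotoneOn J (Set.Icc r (2 * r)) → 0 < J r →
      MonotoneOn g (Set.Ici 0) → (∀ t > (0:ℝ), 0 < g t) →
      (∀ r₁ r₂ : ℝ, r ≤ r₁ → r₁ < r₂ → r₂ ≤ 2 * r →
        J r₂ - J r₁ ≥ C * (r₂ - r₁) ^ m * g (J r₁)) →
      ((∫ ζ in Set.Ioc (J r) (J (2 * r)), 1 / g (ζ / 2)) ≥ C' * r ^ m ∨
       (∫ ζ in Set.Ioc (J r) (J (2 * r)),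
          g (ζ / 2) ^ (-(1/(m:ℝ))) * ζ ^ ((1/(m:ℝ)) - 1)) ≥ C' * r) := by
  have hκ := blockConstant_pos hm hC
  refine ⟨min (C / 2 ^ m) (blockConstant m C / 2), lt_min (by positivity) (by positivity), ?_⟩
  intro r J g hr hJ hJr hg hgpos hiter
  have hJ2r : J r ≤ J (2 * r) := hJ ⟨le_rfl, by linarith⟩ ⟨by linarith, le_rfl⟩ (by linarith)
  rw [← intervalIntegral.integral_of_le hJ2r, ← intervalIntegral.integral_of_le hJ2r]
  obtain ⟨u, hu, hFu, hF | hG⟩ := exists_stop_point hm hC hr.le hJ hJr hg hgpos hiter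
  · right
    calc min (C / 2 ^ m) (blockConstant m C / 2) * r ≤ blockConstant m C / 2 * r := by
          gcongr; exact min_le_right _ _
      _ ≤ blockConstant m C * r := by nlinarith
      _ ≤ _ := hF
  rcases le_or_gt (r / 2) (u - r) with hfar | hnear
  · right
    calc min (C / 2 ^ m) (blockConstant m C / 2) * r ≤ blockConstant m C / 2 * r := by
          gcongr; exact min_le_right _ _
      _ ≤ blockConstant m C * (u - r) := by nlinarith
      _ ≤ _ := hFu
  · left
    calc min (C / 2 ^ m) (blockConstant m C / 2) * r ^ m ≤ C / 2 ^ m * r ^ m := by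
          gcongr; exact min_le_left _ _
      _ = C * (r / 2) ^ m := by rw [div_pow]; ring
      _ ≤ C * (2 * r - u) ^ m := by gcongr; linarith
      _ ≤ _ := hG
end

section
/- Let r > 0 and let J : [r, 2r] → (0,∞) be non-decreasing with values satisfying J(r_{i+1}) = 2 J(r_i) along a finite sequence r = r₀ < r₁ < … < r_l with r_l ≥ 3r/2, where each step satisfies ((J(r_{i+1}) − J(r_i))/g(J(r_i)))^{1/m} ≥ C(r_{i+1} − r_i) for a non-decreasing positive g and integer m ≥ 1. Then ∫_{J(r₀)}^{J(r_l)} g(ζ/2)^{-1/m} ζ^{1/m−1} dζ ≥ C' (r_l − r₀) ≥ C' r/2, where C' > 0 depends only on C and m. -/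
/-!
On each doubling step `[a, 2a]` the integrand `g (ζ / 2) ^ (-p) * ζ ^ (p - 1)` (with `p = 1/m`)
is antitone, so it is at least its value at `2a`, namely `g a ^ (-p) * (2a) ^ (p - 1)`.
Integrating over an interval of length `a` gives `2 ^ (p - 1) * (a / g a) ^ p`, which by the
step hypothesis dominates `2 ^ (p - 1) * C * (ρ (i+1) - ρ i)`; summing over the steps telescopes.
-/

open Real MeasureTheory Set

noncomputable def doublingWeight (g : ℝ → ℝ) (p ζ : ℝ) : ℝ := g (ζ / 2) ^ (-p) * ζ ^ (p - 1)

section doublingWeight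

variable {g : ℝ → ℝ} {p : ℝ}

lemma doublingWeight_antitoneOn (hp0 : 0 ≤ p) (hp1 : p ≤ 1) (hg : MonotoneOn g (Ici 0))
    (hgpos : ∀ t > 0, 0 < g t) : AntitoneOn (doublingWeight g p) (Ioi 0) := by
  intro x (hx : 0 < x) y (hy : 0 < y) hxy
  have hgx : 0 < g (x / 2) := hgpos _ (by positivity)
  have hgxy : g (x / 2) ≤ g (y / 2) :=
    hg (mem_Ici.2 (by positivity)) (mem_Ici.2 (by positivity)) (by linarith)
  exact mul_le_mul (rpow_le_rpow_of_nonpos hgx hgxy (by linarith))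
    (rpow_le_rpow_of_nonpos hx hxy (by linarith)) (by positivity) (by positivity)

lemma intervalIntegrable_doublingWeight (hp0 : 0 ≤ p) (hp1 : p ≤ 1)
    (hg : MonotoneOn g (Ici 0)) (hgpos : ∀ t > 0, 0 < g t) {a b : ℝ} (ha : 0 < a) (hb : 0 < b) :
    IntervalIntegrable (doublingWeight g p) volume a b :=
  ((doublingWeight_antitoneOn hp0 hp1 hg hgpos).mono fun _ hx =>
    lt_of_lt_of_le (lt_min ha hb) hx.1).intervalIntegrable

lemma mul_doublingWeight_two_mul {a : ℝ} (ha : 0 < a) (hga : 0 < g a) :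
    a * doublingWeight g p (2 * a) = 2 ^ (p - 1) * (a / g a) ^ p := by
  rw [doublingWeight, mul_div_cancel_left₀ a two_ne_zero, mul_rpow zero_le_two ha.le,
    div_rpow ha.le hga.le, rpow_neg hga.le, rpow_sub ha, rpow_one]
  field_simp

lemma rpow_le_integral_doublingWeight (hp0 : 0 ≤ p) (hp1 : p ≤ 1) (hg : MonotoneOn g (Ici 0))
    (hgpos : ∀ t > 0, 0 < g t) {a : ℝ} (ha : 0 < a) :
    2 ^ (p - 1) * (a / g a) ^ p ≤ ∫ ζ in a..2 * a, doublingWeight g p ζ := by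
  have hanti := doublingWeight_antitoneOn hp0 hp1 hg hgpos
  have h2a : (0 : ℝ) < 2 * a := by positivity
  calc 2 ^ (p - 1) * (a / g a) ^ p = ∫ _ in a..2 * a, doublingWeight g p (2 * a) := by
        rw [intervalIntegral.integral_const, smul_eq_mul, ← mul_doublingWeight_two_mul ha
          (hgpos a ha)]
        ring
    _ ≤ ∫ ζ in a..2 * a, doublingWeight g p ζ :=
        intervalIntegral.integral_mono_on (by linarith) intervalIntegrable_const
          (intervalIntegrable_doublingWeight hp0 hp1 hg hgpos ha h2a)
          fun ζ hζ => hanti (lt_of_lt_of_le ha hζ.1) h2a hζ.2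

end doublingWeight

lemma eq_two_pow_mul_of_doubling {a : ℕ → ℝ} {l : ℕ} (hdouble : ∀ i < l, a (i + 1) = 2 * a i) :
    ∀ i ≤ l, a i = 2 ^ i * a 0
  | 0, _ => by simp
  | i + 1, hi => by
    rw [hdouble i hi, eq_two_pow_mul_of_doubling hdouble i (Nat.le_of_succ_le hi), pow_succ]
    ring

lemma mul_sub_le_integral_doublingWeight {g : ℝ → ℝ} {p C : ℝ} (hp0 : 0 ≤ p) (hp1 : p ≤ 1)
    (hg : MonotoneOn g (Ici 0)) (hgpos : ∀ t > 0, 0 < g t) {a ρ : ℕ → ℝ} {l : ℕ} (ha0 : 0 < a 0)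
    (hdouble : ∀ i < l, a (i + 1) = 2 * a i)
    (hstep : ∀ i < l, ((a (i + 1) - a i) / g (a i)) ^ p ≥ C * (ρ (i + 1) - ρ i)) :
    2 ^ (p - 1) * C * (ρ l - ρ 0) ≤ ∫ ζ in a 0..a l, doublingWeight g p ζ := by
  have hpos : ∀ i ≤ l, 0 < a i := fun i hi => by
    rw [eq_two_pow_mul_of_doubling hdouble i hi]
    positivity
  rw [← intervalIntegral.sum_integral_adjacent_intervals fun k hk =>
      intervalIntegrable_doublingWeight hp0 hp1 hg hgpos (hpos k hk.le) (hpos (k + 1) hk),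
    ← Finset.sum_range_sub, Finset.mul_sum]
  refine Finset.sum_le_sum fun i hi => ?_
  have hi : i < l := Finset.mem_range.1 hi
  have hstep_i : C * (ρ (i + 1) - ρ i) ≤ (a i / g (a i)) ^ p := by
    simpa [hdouble i hi, two_mul] using hstep i hi
  calc 2 ^ (p - 1) * C * (ρ (i + 1) - ρ i) ≤ 2 ^ (p - 1) * (a i / g (a i)) ^ p := by
        rw [mul_assoc]
        gcongr
    _ ≤ ∫ ζ in a i..2 * a i, doublingWeight g p ζ :=
        rpow_le_integral_doublingWeight hp0 hp1 hg hgpos (hpos i hi.le)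
    _ = ∫ ζ in a i..a (i + 1), doublingWeight g p ζ := by rw [hdouble i hi]

theorem stmt_19_general (m : ℕ) (C : ℝ) (hC : 0 < C) :
    ∃ C' > (0:ℝ), ∀ (r : ℝ) (l : ℕ) (ρ : ℕ → ℝ) (J g : ℝ → ℝ), 0 < r →
      ρ 0 = r → (3 * r / 2 ≤ ρ l) → (ρ l ≤ 2 * r) →
      (∀ i < l, ρ i < ρ (i + 1)) →
      MonotoneOn g (Set.Ici 0) → (∀ t > (0:ℝ), 0 < g t) →
      0 < J (ρ 0) →
      (∀ i < l, J (ρ (i + 1)) = 2 * J (ρ i)) →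
      (∀ i < l, ((J (ρ (i + 1)) - J (ρ i)) / g (J (ρ i))) ^ (1/(m:ℝ))
          ≥ C * (ρ (i + 1) - ρ i)) →
      ((∫ ζ in Set.Ioc (J (ρ 0)) (J (ρ l)),
          g (ζ / 2) ^ (-(1/(m:ℝ))) * ζ ^ ((1/(m:ℝ)) - 1)) ≥ C' * (ρ l - ρ 0) ∧
        C' * (ρ l - ρ 0) ≥ C' * (r / 2)) := by
  have hp0 : 0 ≤ 1 / (m : ℝ) := by positivity
  have hp1 : 1 / (m : ℝ) ≤ 1 := by simpa using Nat.cast_inv_le_one (α := ℝ) m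
  refine ⟨2 ^ (1 / (m : ℝ) - 1) * C, by positivity,
    fun r l ρ J g _ hρ0 hρl _ _ hg hgpos hJ0 hdouble hstep => ⟨?_, ?_⟩⟩
  · have hJl : J (ρ l) = 2 ^ l * J (ρ 0) :=
      eq_two_pow_mul_of_doubling (a := fun i => J (ρ i)) hdouble l le_rfl
    have hle : J (ρ 0) ≤ J (ρ l) := hJl ▸ le_mul_of_one_le_left hJ0.le (one_le_pow₀ one_le_two)
    rw [ge_iff_le, ← intervalIntegral.integral_of_le hle]
    exact mul_sub_le_integral_doublingWeight (a := fun i => J (ρ i)) hp0 hp1 hg hgpos hJ0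
      hdouble hstep
  · gcongr
    linarith

theorem stmt_19 (m : ℕ) (hm : 1 ≤ m) (C : ℝ) (hC : 0 < C) :
    ∃ C' > (0:ℝ), ∀ (r : ℝ) (l : ℕ) (ρ : ℕ → ℝ) (J g : ℝ → ℝ), 0 < r →
      ρ 0 = r → (3 * r / 2 ≤ ρ l) → (ρ l ≤ 2 * r) →
      (∀ i < l, ρ i < ρ (i + 1)) →
      MonotoneOn g (Set.Ici 0) → (∀ t > (0:ℝ), 0 < g t) →
      0 < J (ρ 0) →
      (∀ i < l, J (ρ (i + 1)) = 2 * J (ρ i)) →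
      (∀ i < l, ((J (ρ (i + 1)) - J (ρ i)) / g (J (ρ i))) ^ (1/(m:ℝ))
          ≥ C * (ρ (i + 1) - ρ i)) →
      ((∫ ζ in Set.Ioc (J (ρ 0)) (J (ρ l)),
          g (ζ / 2) ^ (-(1/(m:ℝ))) * ζ ^ ((1/(m:ℝ)) - 1)) ≥ C' * (ρ l - ρ 0) ∧
        C' * (ρ l - ρ 0) ≥ C' * (r / 2)) :=
  stmt_19_general m C hC
end
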